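/- Assume condition (6) holds, let A ∈ 𝔏_Λ, and for each word w set a_w = ⟨A ξ_e, ξ_w⟩. Then for every word v in F_n^+ and every word w in F_n^+ one has ⟨A ξ_v, ξ_{wv}⟩ = W_μ(e,v)^{-1} · a_w · W_μ(w,v), and ⟨A ξ_v, ξ_x⟩ = 0 for every word x that is not of the form x = wv for some word w. -/

import Mathlib

/-!
Each word `T_u` in the generators is a weighted shift, `T_u ξ_v = W(v,u) ξ_{uv}`, so its matrix is
supported on the entries `(uv, v)`. The right weights telescope,
`W_μ(v,w) · W(e,v) · ∏_{i ∈ w} λ_{i,e} = W(e,vw)`, which together with the cocycle identity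
`W(e,uv) = W(v,u) W(e,v)` gives `W(v,u) = W_μ(e,v)⁻¹ W_μ(u,v) W(e,u)`. Hence every word satisfies
the linear relations `m(wv, v) = W_μ(e,v)⁻¹ W_μ(w,v) m(w, e)` and `m(x, v) = 0` for `x ∉ F_n^+ v`
on its matrix entries `m(x, y) = ⟨ξ_x, T ξ_y⟩`. These relations survive linear combinations and,
being closed in the weak operator topology, limits.
-/

noncomputable section

/-- Auxiliary recursion for the weight function: `W(u, []) = 1` and, reading the word
`w = i_k ⋯ i_1` as the list `[i_k, …, i_1]`,
`W(u, i :: w) = λ_{i, w·u} · W(u, w)`, so that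
`W(u, i_k⋯i_1) = λ_{i_1,u} · λ_{i_2, i_1 u} ⋯ λ_{i_k, i_{k-1}⋯i_1 u}`. -/
def Waux {n : ℕ} (lam : Fin n → FreeMonoid (Fin n) → ℝ) (u : FreeMonoid (Fin n)) :
    List (Fin n) → ℝ
  | [] => 1
  | i :: w => lam i (FreeMonoid.ofList w * u) * Waux lam u w

/-- The weight function `W : F_n^+ × F_n^+ → ℝ` associated to the weights `λ_{i,w}`. -/
def Wfun {n : ℕ} (lam : Fin n → FreeMonoid (Fin n) → ℝ) (u w : FreeMonoid (Fin n)) : ℝ :=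
  Waux lam u (FreeMonoid.toList w)

instance {n : ℕ} : DecidableEq (FreeMonoid (Fin n)) := Classical.decEq _

/-- `n`-variable Fock space `H_n = ℓ²(F_n^+)`. -/
abbrev Hn (n : ℕ) : Type := lp (fun _ : FreeMonoid (Fin n) => ℂ) 2

/-- The standard orthonormal basis vector `ξ_w` of `H_n`. -/
def xi {n : ℕ} (w : FreeMonoid (Fin n)) : Hn n := lp.single 2 w 1

/-- The unital WOT-closed algebra generated by a tuple of bounded operators on `H_n`:
the closure, in the weak operator topology, of the unital subalgebra they generate. -/
def wotAlg {n : ℕ} (T : Fin n → (Hn n →L[ℂ] Hn n)) : Set (Hn n →L[ℂ] Hn n) :=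
  (ContinuousLinearMapWOT.ofCLM :
    (Hn n →L[ℂ] Hn n) → ContinuousLinearMapWOT (RingHom.id ℂ) (Hn n) (Hn n)) ⁻¹'
    (closure ((ContinuousLinearMapWOT.ofCLM :
    (Hn n →L[ℂ] Hn n) → ContinuousLinearMapWOT (RingHom.id ℂ) (Hn n) (Hn n)) ''
      (Algebra.adjoin ℂ (Set.range T) : Subalgebra ℂ (Hn n →L[ℂ] Hn n))))

/-- Auxiliary recursion for the right weight function: reading `w = i_1 ⋯ i_k` as the
list `[i_1, …, i_k]`, `W_μ(v, i :: w) = μ_{i,v} · W_μ(v·i, w)`, so that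
`W_μ(v, i_1⋯i_k) = μ_{i_1,v} · μ_{i_2, v i_1} ⋯ μ_{i_k, v i_1⋯i_{k-1}}`. -/
def WmuAux {n : ℕ} (mu : Fin n → FreeMonoid (Fin n) → ℝ) :
    FreeMonoid (Fin n) → List (Fin n) → ℝ
  | _, [] => 1
  | v, i :: w => mu i v * WmuAux mu (v * FreeMonoid.of i) w

/-- The right weight function `W_μ : F_n^+ × F_n^+ → ℝ`. -/
def WmuFun {n : ℕ} (mu : Fin n → FreeMonoid (Fin n) → ℝ) (v w : FreeMonoid (Fin n)) : ℝ :=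
  WmuAux mu v (FreeMonoid.toList w)

/-- The right weights `μ_{i,w} = W(i,w) · W(e,w)⁻¹` coming from condition (6). -/
def muW {n : ℕ} (lam : Fin n → FreeMonoid (Fin n) → ℝ) :
    Fin n → FreeMonoid (Fin n) → ℝ :=
  fun i w => Wfun lam (FreeMonoid.of i) w * (Wfun lam 1 w)⁻¹

open FreeMonoid
open scoped InnerProductSpace

section Weights

variable {n : ℕ} {lam : Fin n → FreeMonoid (Fin n) → ℝ}

lemma Waux_append (u : FreeMonoid (Fin n)) (l₁ l₂ : List (Fin n)) :
    Waux lam u (l₁ ++ l₂) = Waux lam (ofList l₂ * u) l₁ * Waux lam u l₂ := by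
  induction l₁ with
  | nil => simp [Waux]
  | cons i l₁ ih =>
    simp only [List.cons_append, Waux, ih, ofList_append, mul_assoc]

lemma Wfun_mul (u w₁ w₂ : FreeMonoid (Fin n)) :
    Wfun lam u (w₁ * w₂) = Wfun lam (w₂ * u) w₁ * Wfun lam u w₂ := by
  rw [Wfun, toList_mul, Waux_append, ofList_toList]
  rfl

@[simp]
lemma Wfun_one (u : FreeMonoid (Fin n)) : Wfun lam u 1 = 1 := rfl

@[simp]
lemma Wfun_of (u : FreeMonoid (Fin n)) (i : Fin n) : Wfun lam u (of i) = lam i u := by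
  simp [Wfun, Waux]

lemma Wfun_pos (hpos : ∀ i w, 0 < lam i w) (u w : FreeMonoid (Fin n)) : 0 < Wfun lam u w := by
  unfold Wfun
  induction w.toList with
  | nil => exact one_pos
  | cons i l ih => exact mul_pos (hpos _ _) ih

lemma muW_mul_Wfun_one (hpos : ∀ i w, 0 < lam i w) (i : Fin n) (x : FreeMonoid (Fin n)) :
    muW lam i x * Wfun lam 1 x * lam i 1 = Wfun lam 1 (x * of i) := by
  rw [muW, inv_mul_cancel_right₀ (Wfun_pos hpos 1 x).ne', Wfun_mul, Wfun_of, mul_one]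

lemma WmuFun_muW_mul_Wfun_one (hpos : ∀ i w, 0 < lam i w) (v w : FreeMonoid (Fin n)) :
    WmuFun (muW lam) v w * Wfun lam 1 v * (w.toList.map (lam · 1)).prod = Wfun lam 1 (v * w) := by
  rw [WmuFun, ← ofList_toList w, toList_ofList]
  induction w.toList generalizing v with
  | nil => simp [WmuAux]
  | cons i l ih =>
    rw [WmuAux, List.map_cons, List.prod_cons, ofList_cons, ← mul_assoc v, ← ih,
      ← muW_mul_Wfun_one hpos]
    ring

lemma Wfun_eq_WmuFun_mul (hpos : ∀ i w, 0 < lam i w) (v w : FreeMonoid (Fin n)) :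
    Wfun lam v w = (WmuFun (muW lam) 1 v)⁻¹ * WmuFun (muW lam) w v * Wfun lam 1 w := by
  have h₁ := WmuFun_muW_mul_Wfun_one hpos 1 v
  have h₂ := WmuFun_muW_mul_Wfun_one hpos w v
  have hP : 0 < (v.toList.map (lam · 1)).prod :=
    List.prod_pos fun x hx => by obtain ⟨i, -, rfl⟩ := List.mem_map.1 hx; exact hpos i 1
  simp only [one_mul, Wfun_one, mul_one, Wfun_mul] at h₁ h₂
  have hWmu : WmuFun (muW lam) 1 v ≠ 0 :=
    left_ne_zero_of_mul (h₁ ▸ (Wfun_pos hpos 1 v).ne')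
  rw [inv_mul_eq_div, div_mul_eq_mul_div, eq_div_iff hWmu]
  apply mul_right_cancel₀ hP.ne'
  linear_combination Wfun lam v w * h₁ - h₂

end Weights

section WeightedToeplitz

variable {M : Type*} [Monoid M]

/-- For `M = ℕ` (written additively) and `c ≡ 1` these are the lower triangular Toeplitz
matrices. -/
def weightedToeplitz (c : M → M → ℝ) : Submodule ℂ (M → M → ℂ) where
  carrier := {m | (∀ v w, m (w * v) v = c v w * m w 1) ∧
    ∀ v x, (¬ ∃ w, x = w * v) → m x v = 0}
  add_mem' := by
    rintro m m' ⟨hm₁, hm₂⟩ ⟨hm'₁, hm'₂⟩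
    refine ⟨fun v w => ?_, fun v x hx => ?_⟩
    · simp only [Pi.add_apply, hm₁, hm'₁, mul_add]
    · simp only [Pi.add_apply, hm₂ v x hx, hm'₂ v x hx, add_zero]
  zero_mem' := by simp
  smul_mem' := by
    rintro a m ⟨hm₁, hm₂⟩
    refine ⟨fun v w => ?_, fun v x hx => ?_⟩
    · simp only [Pi.smul_apply, smul_eq_mul, hm₁]
      ring
    · simp only [Pi.smul_apply, smul_eq_mul, hm₂ v x hx, mul_zero]

lemma isClosed_weightedToeplitz (c : M → M → ℝ) :
    IsClosed (weightedToeplitz c : Set (M → M → ℂ)) := by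
  change IsClosed ({m : M → M → ℂ | ∀ v w, m (w * v) v = c v w * m w 1} ∩
    {m : M → M → ℂ | ∀ v x, (¬ ∃ w, x = w * v) → m x v = 0})
  simp only [Set.ofPred_forall]
  refine .inter (isClosed_iInter fun v => isClosed_iInter fun w => isClosed_eq ?_ ?_)
    (isClosed_iInter fun v => isClosed_iInter fun x => isClosed_iInter fun _ =>
      isClosed_eq ?_ continuous_const) <;>
  fun_prop

lemma ite_mem_weightedToeplitz [IsRightCancelMul M] [DecidableEq M] {c : M → M → ℝ} {u : M}
    {f : M → ℂ} (hf : ∀ v, f v = c v u * f 1) :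
    (fun x v => if x = u * v then f v else 0) ∈ weightedToeplitz c := by
  refine ⟨fun v w => ?_, fun v x hx => if_neg fun h => hx ⟨u, h⟩⟩
  by_cases hw : w = u
  · simp [hw, hf v]
  · simp [hw]

end WeightedToeplitz

section Operators

variable {n : ℕ}

lemma inner_xi_xi (x y : FreeMonoid (Fin n)) : ⟪xi x, xi y⟫_ℂ = if x = y then 1 else 0 := by
  rw [xi, xi, lp.inner_single_left, lp.single_apply, Pi.single_apply]
  split_ifs <;> simp_all

def matrixCoeff : (Hn n →L[ℂ] Hn n) →ₗ[ℂ] (FreeMonoid (Fin n) → FreeMonoid (Fin n) → ℂ) where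
  toFun B x y := ⟪xi x, B (xi y)⟫_ℂ
  map_add' B B' := by ext; simp
  map_smul' a B := by ext; simp

@[simp]
lemma matrixCoeff_apply (B : Hn n →L[ℂ] Hn n) (x y : FreeMonoid (Fin n)) :
    matrixCoeff B x y = ⟪xi x, B (xi y)⟫_ℂ := rfl

lemma matrixCoeff_mem_of_mem_wotAlg {T : Fin n → (Hn n →L[ℂ] Hn n)}
    {K : Submodule ℂ (FreeMonoid (Fin n) → FreeMonoid (Fin n) → ℂ)}
    (hK : IsClosed (K : Set (FreeMonoid (Fin n) → FreeMonoid (Fin n) → ℂ)))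
    (hmono : ∀ B ∈ Submonoid.closure (Set.range T), matrixCoeff B ∈ K)
    {A : Hn n →L[ℂ] Hn n} (hA : A ∈ wotAlg T) : matrixCoeff A ∈ K := by
  have hadjoin : ∀ B ∈ Algebra.adjoin ℂ (Set.range T), matrixCoeff B ∈ K := by
    intro B hB
    change B ∈ Subalgebra.toSubmodule (Algebra.adjoin ℂ (Set.range T)) at hB
    rw [Algebra.adjoin_eq_span] at hB
    exact (Submodule.span_le (p := K.comap matrixCoeff)).2 hmono hB
  have hcont : Continuous fun B : Hn n →WOT[ℂ] Hn n => matrixCoeff B.toCLM :=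
    continuous_pi fun x => continuous_pi fun y =>
      ContinuousLinearMapWOT.continuous_iff.mp continuous_id (xi y) (xi x)
  refine closure_minimal ?_ (hK.preimage hcont) hA
  rintro _ ⟨B, hB, rfl⟩
  exact hadjoin B hB

lemma exists_apply_xi_of_mem_closure_range {lam : Fin n → FreeMonoid (Fin n) → ℝ}
    {T : Fin n → (Hn n →L[ℂ] Hn n)}
    (hT : ∀ i w, T i (xi w) = (lam i w : ℂ) • xi (of i * w))
    {B : Hn n →L[ℂ] Hn n} (hB : B ∈ Submonoid.closure (Set.range T)) :
    ∃ u, ∀ v, B (xi v) = (Wfun lam v u : ℂ) • xi (u * v) := by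
  induction hB using Submonoid.closure_induction with
  | mem _ hB =>
    obtain ⟨i, rfl⟩ := hB
    exact ⟨of i, fun v => by rw [hT, Wfun_of]⟩
  | one => exact ⟨1, fun v => by simp⟩
  | mul B B' _ _ hB hB' =>
    obtain ⟨u, hu⟩ := hB
    obtain ⟨u', hu'⟩ := hB'
    refine ⟨u * u', fun v => ?_⟩
    rw [mul_apply_eq_comp, hu', map_smul, hu, smul_smul, mul_assoc, Wfun_mul,
      Complex.ofReal_mul, mul_comm]

lemma matrixCoeff_mem_weightedToeplitz_of_mem_closure_range
    {lam : Fin n → FreeMonoid (Fin n) → ℝ} (hpos : ∀ i w, 0 < lam i w)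
    {T : Fin n → (Hn n →L[ℂ] Hn n)}
    (hT : ∀ i w, T i (xi w) = (lam i w : ℂ) • xi (of i * w))
    {B : Hn n →L[ℂ] Hn n} (hB : B ∈ Submonoid.closure (Set.range T)) :
    matrixCoeff B ∈
      weightedToeplitz fun v w => (WmuFun (muW lam) 1 v)⁻¹ * WmuFun (muW lam) w v := by
  obtain ⟨u, hu⟩ := exists_apply_xi_of_mem_closure_range hT hB
  have hcoeff : matrixCoeff B = fun x v => if x = u * v then (Wfun lam v u : ℂ) else 0 := by
    ext x v
    simp [hu, inner_xi_xi]
  rw [hcoeff]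
  exact ite_mem_weightedToeplitz fun v => by
    rw [Wfun_eq_WmuFun_mul hpos v u]
    push_cast
    ring

end Operators

theorem LLambda_fourier_expansion_general (n : ℕ)
    (lam : Fin n → FreeMonoid (Fin n) → ℝ)
    (hpos : ∀ i w, 0 < lam i w)
    (T : Fin n → (Hn n →L[ℂ] Hn n))
    (hT : ∀ i w, T i (xi w) = (lam i w : ℂ) • xi (FreeMonoid.of i * w))
    (A : Hn n →L[ℂ] Hn n) (hA : A ∈ wotAlg T)
    (a : FreeMonoid (Fin n) → ℂ) (ha : ∀ w, a w = @inner ℂ _ _ (A (xi 1)) (xi w)) :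
    (∀ v w : FreeMonoid (Fin n),
        @inner ℂ _ _ (A (xi v)) (xi (w * v)) =
          ((WmuFun (muW lam) 1 v)⁻¹ : ℂ) * a w * (WmuFun (muW lam) w v : ℂ)) ∧
      (∀ v x : FreeMonoid (Fin n), (¬ ∃ w, x = w * v) →
        @inner ℂ _ _ (A (xi v)) (xi x) = 0) := by
  obtain ⟨hcolumn, hzero⟩ := matrixCoeff_mem_of_mem_wotAlg (isClosed_weightedToeplitz _)
    (fun B hB => matrixCoeff_mem_weightedToeplitz_of_mem_closure_range hpos hT hB) hA
  refine ⟨fun v w => ?_, fun v x hx => ?_⟩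
  · rw [← inner_conj_symm, ← matrixCoeff_apply, hcolumn, map_mul, Complex.conj_ofReal,
      matrixCoeff_apply, inner_conj_symm, ha]
    push_cast
    ring
  · rw [← inner_conj_symm, ← matrixCoeff_apply, hzero v x hx, map_zero]

/-- Assume condition (6) holds, let `A ∈ 𝔏_Λ`, and set
`a_w = ⟨A ξ_e, ξ_w⟩`. Then for all words `v, w`,
`⟨A ξ_v, ξ_{wv}⟩ = W_μ(e,v)⁻¹ · a_w · W_μ(w,v)`, and `⟨A ξ_v, ξ_x⟩ = 0` whenever `x`
is not of the form `x = wv`. -/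
theorem LLambda_fourier_expansion (n : ℕ) (hn : 2 ≤ n)
    (lam : Fin n → FreeMonoid (Fin n) → ℝ)
    (hpos : ∀ i w, 0 < lam i w) (hbdd : ∃ C : ℝ, ∀ i w, lam i w ≤ C)
    (h6 : ∃ C : ℝ, ∀ i w, Wfun lam (FreeMonoid.of i) w * (Wfun lam 1 w)⁻¹ ≤ C)
    (T : Fin n → (Hn n →L[ℂ] Hn n))
    (hT : ∀ i w, T i (xi w) = (lam i w : ℂ) • xi (FreeMonoid.of i * w))
    (A : Hn n →L[ℂ] Hn n) (hA : A ∈ wotAlg T)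
    (a : FreeMonoid (Fin n) → ℂ) (ha : ∀ w, a w = @inner ℂ _ _ (A (xi 1)) (xi w)) :
    (∀ v w : FreeMonoid (Fin n),
        @inner ℂ _ _ (A (xi v)) (xi (w * v)) =
          ((WmuFun (muW lam) 1 v)⁻¹ : ℂ) * a w * (WmuFun (muW lam) w v : ℂ)) ∧
      (∀ v x : FreeMonoid (Fin n), (¬ ∃ w, x = w * v) →
        @inner ℂ _ _ (A (xi v)) (xi x) = 0) :=
  LLambda_fourier_expansion_general n lam hpos T hT A hA a ha
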